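/- For every positive integer m, the maximum asymptotic density δ_∞(2m) of zero-error codes for 2m-event signals under unbounded time dilation equals (−1)^{m+1} · 2 · (2m)! / ((2π)^{2m} · B_{2m}), where B_{2m} is the (2m)-th Bernoulli number; that is, lim_{N→∞} |C(N,2m)| / binomial(N,2m) = (−1)^{m+1} · 2 · (2m)! / ((2π)^{2m} · B_{2m}). -/

import Mathlib

open Filter

/-- The space of `k`-event signals: `k` inter-event intervals, each at least 1,
summing to at most `N`. -/
def SignalSpace (N k : ℕ) : Finset (Fin k → ℕ) :=
  (Fintype.piFinset fun _ => Finset.Icc 1 N).filter fun t => ∑ i, t i ≤ N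

/-- The signals in `SignalSpace N k` whose coordinates are coprime (gcd 1). -/
def CoprimeCode (N k : ℕ) : Finset (Fin k → ℕ) :=
  (SignalSpace N k).filter fun t => Finset.univ.gcd t = 1

/-!
Since `∑_{d ∣ n} μ(d)` detects `n = 1`, `|C(N,k)| = ∑_{d ≤ N} μ(d) · #{t ∈ T(N,k) : d ∣ gcd t}`,
and the signals divisible by `d` are `d` times those of `T(⌊N/d⌋,k)`; with
`|T(N,k)| = binomial(N,k)` this gives `|C(N,k)| = ∑_{d ≤ N} μ(d) · binomial(⌊N/d⌋,k)`.
Each ratio `binomial(⌊N/d⌋,k) / binomial(N,k)` tends to `d^{-k}` and is bounded by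
`(⌊N/d⌋/N)^k ≤ d^{-k}`, so by dominated convergence the density tends to
`∑ μ(d) d^{-k} = ζ(k)⁻¹`, and Euler's formula for `ζ(2m)` gives the closed form.
-/

open Finset ArithmeticFunction
open scoped ArithmeticFunction.Moebius

theorem mem_signalSpace {N k : ℕ} {t : Fin k → ℕ} :
    t ∈ SignalSpace N k ↔ (∀ i, 1 ≤ t i) ∧ ∑ i, t i ≤ N := by
  simp only [SignalSpace, mem_filter, Fintype.mem_piFinset, mem_Icc]
  refine ⟨fun h => ⟨fun i => (h.1 i).1, h.2⟩, fun h => ⟨fun i => ⟨h.1 i, ?_⟩, h.2⟩⟩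
  exact (single_le_sum (fun j _ => Nat.zero_le (t j)) (mem_univ i)).trans h.2

theorem card_filter_signalSpace_succ_apply_zero {N k j : ℕ} (hj : j ∈ Icc 1 N) :
    #{t ∈ SignalSpace N (k + 1) | t 0 = j} = #(SignalSpace (N - j) k) := by
  rw [mem_Icc] at hj
  refine card_nbij' Fin.tail (fun s => (Fin.cons j s : Fin (k + 1) → ℕ)) (fun t ht => ?_)
    (fun s hs => ?_) (fun t ht => ?_) (fun s _ => by simp)
  · simp only [mem_coe, mem_filter, mem_signalSpace, Fin.sum_univ_succ] at ht ⊢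
    exact ⟨fun i => ht.1.1 i.succ, by simp only [Fin.tail]; omega⟩
  · simp only [mem_coe, mem_filter, mem_signalSpace, Fin.sum_univ_succ] at hs ⊢
    refine ⟨⟨Fin.cases hj.1 hs.1, ?_⟩, Fin.cons_zero _ _⟩
    simp only [Fin.cons_zero, Fin.cons_succ]
    omega
  · obtain ⟨-, rfl⟩ := mem_filter.1 (mem_coe.1 ht)
    exact Fin.cons_self_tail t

theorem Nat.sum_range_choose_eq_choose_succ (n k : ℕ) :
    ∑ i ∈ range n, i.choose k = n.choose (k + 1) := by
  induction n with
  | zero => simp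
  | succ n ih => rw [sum_range_succ, ih, Nat.choose_succ_succ', add_comm]

theorem card_signalSpace (N k : ℕ) : #(SignalSpace N k) = N.choose k := by
  induction k generalizing N with
  | zero => simp [SignalSpace]
  | succ k ih =>
    have hfst : ∀ t ∈ SignalSpace N (k + 1), t 0 ∈ Icc 1 N := fun t ht =>
      Fintype.mem_piFinset.1 (mem_filter.1 ht).1 0
    rw [card_eq_sum_card_fiberwise hfst,
      sum_congr rfl fun j hj => (card_filter_signalSpace_succ_apply_zero hj).trans (ih _),
      ← Nat.sum_range_choose_eq_choose_succ, range_eq_Ico, ← Ico_add_one_right_eq_Icc,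
      sum_Ico_reflect (·.choose k) 1 (le_refl (N + 1))]
    simp

theorem card_filter_dvd_gcd_signalSpace {N k d : ℕ} (hd : d ≠ 0) :
    #{t ∈ SignalSpace N k | d ∣ univ.gcd t} = (N / d).choose k := by
  rw [← card_signalSpace]
  have hd' : 0 < d := Nat.pos_of_ne_zero hd
  refine card_nbij' (fun t i => t i / d) (fun s i => d * s i) (fun t ht => ?_) (fun s hs => ?_)
    (fun t ht => ?_) (fun s _ => funext fun i => Nat.mul_div_cancel_left _ hd')
  · simp only [mem_coe, mem_filter, mem_signalSpace, Finset.dvd_gcd_iff, mem_univ, true_implies]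
      at ht ⊢
    obtain ⟨⟨hpos, hsum⟩, hdvd⟩ := ht
    refine ⟨fun i => (Nat.one_le_div_iff hd').2 (Nat.le_of_dvd (hpos i) (hdvd i)), ?_⟩
    rw [Nat.le_div_iff_mul_le hd', sum_mul]
    exact (sum_congr rfl fun i _ => Nat.div_mul_cancel (hdvd i)).trans_le hsum
  · simp only [mem_coe, mem_filter, mem_signalSpace, Finset.dvd_gcd_iff, mem_univ, true_implies]
      at hs ⊢
    refine ⟨⟨fun i => Nat.one_le_iff_ne_zero.2 (mul_ne_zero hd (by have := hs.1 i; omega)), ?_⟩,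
      fun i => dvd_mul_right d _⟩
    rw [← mul_sum]
    exact (Nat.mul_le_mul_left d hs.2).trans (Nat.mul_div_le N d)
  · obtain ⟨-, hdvd⟩ := mem_filter.1 (mem_coe.1 ht)
    exact funext fun i => Nat.mul_div_cancel' ((Finset.dvd_gcd_iff.1 hdvd) i (mem_univ i))

theorem card_filter_eq_one_eq_sum_moebius {α : Type*} (s : Finset α) (f : α → ℕ) {N : ℕ}
    (hf : ∀ a ∈ s, f a ∈ Icc 1 N) :
    (#{a ∈ s | f a = 1} : ℤ) = ∑ d ∈ Icc 1 N, μ d * #{a ∈ s | d ∣ f a} := by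
  have hdiv : ∀ a ∈ s, (f a).divisors = {d ∈ Icc 1 N | d ∣ f a} := fun a ha => by
    ext d
    simp only [Nat.mem_divisors, mem_filter, mem_Icc]
    have := mem_Icc.1 (hf a ha)
    constructor
    · rintro ⟨hd, -⟩
      exact ⟨⟨Nat.pos_of_dvd_of_pos hd (by omega), (Nat.le_of_dvd (by omega) hd).trans this.2⟩, hd⟩
    · exact fun h => ⟨h.2, by omega⟩
  calc (#{a ∈ s | f a = 1} : ℤ) = ∑ a ∈ s, ∑ d ∈ (f a).divisors, μ d := by
        rw [card_filter]; push_cast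
        refine sum_congr rfl fun a _ => ?_
        rw [← coe_mul_zeta_apply, moebius_mul_coe_zeta, one_apply]
    _ = ∑ a ∈ s, ∑ d ∈ Icc 1 N, if d ∣ f a then μ d else 0 := by
        refine sum_congr rfl fun a ha => ?_
        rw [hdiv a ha, sum_filter]
    _ = ∑ d ∈ Icc 1 N, μ d * #{a ∈ s | d ∣ f a} := by
        rw [sum_comm]
        refine sum_congr rfl fun d _ => ?_
        rw [← sum_filter, sum_const, nsmul_eq_mul, mul_comm]

theorem card_coprimeCode (N : ℕ) {k : ℕ} (hk : k ≠ 0) :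
    (#(CoprimeCode N k) : ℤ) = ∑ d ∈ Icc 1 N, μ d * (N / d).choose k := by
  have hgcd : ∀ t ∈ SignalSpace N k, univ.gcd t ∈ Icc 1 N := fun t ht => by
    obtain ⟨hpos, hsum⟩ := mem_signalSpace.1 ht
    let i : Fin k := ⟨0, Nat.pos_of_ne_zero hk⟩
    have hdvd : univ.gcd t ∣ t i := Finset.gcd_dvd (mem_univ i)
    have hle : t i ≤ N := (single_le_sum (fun j _ => Nat.zero_le (t j)) (mem_univ i)).trans hsum
    exact mem_Icc.2 ⟨Nat.pos_of_dvd_of_pos hdvd (hpos i), (Nat.le_of_dvd (hpos i) hdvd).trans hle⟩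
  rw [CoprimeCode, card_filter_eq_one_eq_sum_moebius _ _ hgcd]
  refine sum_congr rfl fun d hd => ?_
  rw [card_filter_dvd_gcd_signalSpace (by have := mem_Icc.1 hd; omega)]

theorem Nat.descFactorial_mul_pow_le_descFactorial_mul_pow {m n : ℕ} (h : m ≤ n) (k : ℕ) :
    m.descFactorial k * n ^ k ≤ n.descFactorial k * m ^ k := by
  induction k with
  | zero => simp
  | succ k ih =>
    have hstep : (m - k) * n ≤ (n - k) * m := by
      rw [Nat.sub_mul, Nat.sub_mul, mul_comm n m]
      exact Nat.sub_le_sub_left (Nat.mul_le_mul_left k h) _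
    calc m.descFactorial (k + 1) * n ^ (k + 1)
        = ((m - k) * n) * (m.descFactorial k * n ^ k) := by
          rw [Nat.descFactorial_succ, pow_succ]; ring
      _ ≤ ((n - k) * m) * (n.descFactorial k * m ^ k) := Nat.mul_le_mul hstep ih
      _ = n.descFactorial (k + 1) * m ^ (k + 1) := by
          rw [Nat.descFactorial_succ, pow_succ]; ring

theorem Nat.choose_mul_pow_le_choose_mul_pow {m n : ℕ} (h : m ≤ n) (k : ℕ) :
    m.choose k * n ^ k ≤ n.choose k * m ^ k := by
  refine Nat.le_of_mul_le_mul_right ?_ k.factorial_pos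
  calc m.choose k * n ^ k * k.factorial = m.descFactorial k * n ^ k := by
        rw [Nat.descFactorial_eq_factorial_mul_choose]; ring
    _ ≤ n.descFactorial k * m ^ k := Nat.descFactorial_mul_pow_le_descFactorial_mul_pow h k
    _ = n.choose k * m ^ k * k.factorial := by
        rw [Nat.descFactorial_eq_factorial_mul_choose]; ring

theorem choose_div_choose_le {m n : ℕ} (h : m ≤ n) (k : ℕ) :
    (m.choose k : ℝ) / n.choose k ≤ ((m : ℝ) / n) ^ k := by
  rcases n.eq_zero_or_pos with rfl | hn0
  · obtain rfl := Nat.le_zero.1 h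
    cases k <;> simp
  rcases (n.choose k).eq_zero_or_pos with hn | hn
  · rw [hn, Nat.cast_zero, div_zero]; positivity
  rw [div_pow, div_le_div_iff₀ (by exact_mod_cast hn) (by positivity), mul_comm _ (n.choose k : ℝ)]
  exact_mod_cast Nat.choose_mul_pow_le_choose_mul_pow h k

open Asymptotics Topology

theorem isEquivalent_natCast_div (d : ℕ) (hd : d ≠ 0) :
    (fun n : ℕ => ((n / d : ℕ) : ℝ)) ~[atTop] fun n => (n : ℝ) / d := by
  refine isEquivalent_of_tendsto_one ?_
  have hdiv : Tendsto (fun n : ℕ => (n : ℝ) / d) atTop atTop :=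
    tendsto_natCast_atTop_atTop.atTop_div_const (by positivity)
  simpa only [Pi.div_def, Function.comp_def, Nat.floor_div_eq_div] using
    (tendsto_nat_floor_div_atTop (R := ℝ)).comp hdiv

theorem tendsto_choose_div_div_choose (k : ℕ) {d : ℕ} (hd : d ≠ 0) :
    Tendsto (fun n : ℕ => ((n / d).choose k : ℝ) / n.choose k) atTop (𝓝 ((d : ℝ) ^ k)⁻¹) := by
  have hnum : (fun n : ℕ => ((n / d).choose k : ℝ)) ~[atTop]
      fun n => ((n : ℝ) / d) ^ k / k.factorial :=
    ((isEquivalent_choose k).comp_tendsto (Nat.tendsto_div_const_atTop hd)).trans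
      (((isEquivalent_natCast_div d hd).pow k).div IsEquivalent.refl)
  refine ((hnum.div (isEquivalent_choose k)).tendsto_nhds_iff).2 <|
    tendsto_const_nhds.congr' ?_
  filter_upwards [eventually_ne_atTop 0] with n hn
  simp only [Pi.div_apply]
  field_simp
  rw [← mul_pow, mul_div_cancel₀ _ (by exact_mod_cast hd)]

theorem choose_div_div_choose_le (N k : ℕ) {d : ℕ} (hd : d ≠ 0) :
    ((N / d).choose k : ℝ) / N.choose k ≤ 1 / (d : ℝ) ^ k := by
  rcases N.eq_zero_or_pos with rfl | hN
  · cases k <;> simp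
  calc ((N / d).choose k : ℝ) / N.choose k ≤ (((N / d : ℕ) : ℝ) / N) ^ k :=
        choose_div_choose_le (Nat.div_le_self N d) k
    _ ≤ ((1 : ℝ) / d) ^ k := by
        gcongr ?_ ^ k
        rw [div_le_div_iff₀ (by exact_mod_cast hN) (by positivity), one_mul]
        exact_mod_cast Nat.div_mul_le_self N d
    _ = 1 / (d : ℝ) ^ k := one_div_pow _ _

theorem tendsto_card_coprimeCode_div_choose {k : ℕ} (hk : 2 ≤ k) :
    Tendsto (fun N : ℕ => (#(CoprimeCode N k) : ℝ) / N.choose k) atTop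
      (𝓝 (∑' d : ℕ, (μ d : ℝ) / (d : ℝ) ^ k)) := by
  set F : ℕ → ℕ → ℝ := fun N d => μ d * (((N / d).choose k : ℝ) / N.choose k)
  have hlim : Tendsto (fun N => ∑' d, F N d) atTop (𝓝 (∑' d : ℕ, (μ d : ℝ) / (d : ℝ) ^ k)) := by
    refine tendsto_tsum_of_dominated_convergence (bound := fun d : ℕ => 1 / (d : ℝ) ^ k)
      (Real.summable_one_div_nat_pow.2 hk) (fun d => ?_) (Eventually.of_forall fun N d => ?_)
    all_goals rcases eq_or_ne d 0 with rfl | hd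
    · simp [F]
    · simpa [F, div_eq_mul_inv] using (tendsto_choose_div_div_choose k hd).const_mul (μ d : ℝ)
    · simp [F]
    · have hμ : |(μ d : ℝ)| ≤ 1 := by exact_mod_cast abs_moebius_le_one
      rw [Real.norm_eq_abs, abs_mul,
        abs_of_nonneg (a := ((N / d).choose k : ℝ) / N.choose k) (by positivity)]
      exact (mul_le_of_le_one_left (by positivity) hμ).trans (choose_div_div_choose_le N k hd)
  refine hlim.congr fun N => ?_
  rw [tsum_eq_sum (s := Icc 1 N) fun d hd => ?_]
  · have := congrArg (fun z : ℤ => (z : ℝ)) (card_coprimeCode N (k := k) (by omega))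
    push_cast at this
    rw [this, sum_div]
    exact sum_congr rfl fun d _ => by simp only [F, mul_div_assoc]
  · rcases eq_or_ne d 0 with rfl | hd0
    · simp [F]
    · have hN : N / d = 0 := Nat.div_eq_of_lt (by simp at hd; omega)
      simp [F, hN, Nat.choose_eq_zero_of_lt (show 0 < k by omega)]

theorem ofReal_tsum_moebius_div_pow {k : ℕ} (hk : 2 ≤ k) :
    ((∑' n : ℕ, (μ n : ℝ) / (n : ℝ) ^ k : ℝ) : ℂ) = (riemannZeta k)⁻¹ := by
  have hs : 1 < (k : ℂ).re := by simp only [Complex.natCast_re]; exact_mod_cast hk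
  rw [← LSeries_one_eq_riemannZeta hs,
    ← eq_inv_of_mul_eq_one_right (LSeries_one_mul_Lseries_moebius hs), Complex.ofReal_tsum]
  refine tsum_congr fun n => ?_
  rcases eq_or_ne n 0 with rfl | hn
  · simp
  · rw [LSeries.term_of_ne_zero hn, Complex.cpow_natCast]
    push_cast
    rfl

theorem tsum_moebius_div_pow_two_mul {m : ℕ} (hm : m ≠ 0) :
    ∑' n : ℕ, (μ n : ℝ) / (n : ℝ) ^ (2 * m) = (-1 : ℝ) ^ (m + 1) * 2 * (2 * m).factorial /
      ((2 * Real.pi) ^ (2 * m) * bernoulli (2 * m)) := by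
  apply Complex.ofReal_injective
  rw [ofReal_tsum_moebius_div_pow (by omega), Nat.cast_mul, Nat.cast_two,
    riemannZeta_two_mul_nat hm]
  obtain ⟨n, hn⟩ : ∃ n, 2 * m = n + 1 := ⟨2 * m - 1, by omega⟩
  rw [hn, Nat.add_sub_cancel]
  push_cast
  rw [inv_div, mul_pow, pow_succ (2 : ℂ) n]
  simp only [div_eq_mul_inv, mul_inv, ← inv_pow, inv_neg, inv_one]
  ring

theorem coprimeCode_density_even (m : ℕ) (hm : 1 ≤ m) :
    Tendsto
      (fun N : ℕ => ((CoprimeCode N (2 * m)).card : ℝ) / (N.choose (2 * m) : ℝ))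
      atTop
      (nhds ((-1 : ℝ) ^ (m + 1) * 2 * (Nat.factorial (2 * m) : ℝ) /
        ((2 * Real.pi) ^ (2 * m) * (bernoulli (2 * m) : ℝ)))) := by
  rw [← tsum_moebius_div_pow_two_mul (by omega)]
  exact tendsto_card_coprimeCode_div_choose (by omega)
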